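/- arXiv:math/0405495 — 12 statements merged into one kernel-verified Lean document; each statement's English description precedes it below -/
import Mathlib

section
/- Let H be an inner product space over the real or complex numbers and let a ∈ H be a unit vector (‖a‖ = 1). Suppose x₁, …, xₙ ∈ H are nonzero vectors and r ≥ 0 satisfies r ≤ Re⟨xᵢ, a⟩ / ‖xᵢ‖ for every i ∈ {1, …, n}. Then r · Σᵢ₌₁ⁿ ‖xᵢ‖ ≤ ‖Σᵢ₌₁ⁿ xᵢ‖, with equality if and only if Σᵢ₌₁ⁿ xᵢ = r (Σᵢ₌₁ⁿ ‖xᵢ‖) a. -/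
/-!
Summing `r ‖xᵢ‖ ≤ Re ⟨xᵢ, a⟩` gives `r ∑ ‖xᵢ‖ ≤ Re ⟨∑ xᵢ, a⟩ ≤ ‖∑ xᵢ‖` by Cauchy–Schwarz. Equality
forces `Re ⟨S, a⟩ = ‖S‖` for `S = ∑ xᵢ`, and against a unit vector `a` this happens only for
`S = ‖S‖ a`.
-/

open RCLike Finset

section

variable {𝕜 H : Type*} [RCLike 𝕜] [NormedAddCommGroup H] [InnerProductSpace 𝕜 H]

theorem mul_norm_le_re_inner_of_le_div {x a : H} {r : ℝ}
    (h : r ≤ re (inner 𝕜 x a : 𝕜) / ‖x‖) : r * ‖x‖ ≤ re (inner 𝕜 x a : 𝕜) := by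
  rcases eq_or_ne x 0 with rfl | hx
  · simp
  · exact (le_div_iff₀ (norm_pos_iff.2 hx)).1 h

theorem re_inner_le_norm_of_norm_eq_one (x : H) {a : H} (ha : ‖a‖ = 1) :
    re (inner 𝕜 x a : 𝕜) ≤ ‖x‖ := by
  simpa [ha] using re_inner_le_norm (𝕜 := 𝕜) x a

theorem eq_norm_smul_of_re_inner_eq_norm {x a : H} (ha : ‖a‖ = 1)
    (h : re (inner 𝕜 x a : 𝕜) = ‖x‖) : x = ((‖x‖ : ℝ) : 𝕜) • a := by
  apply eq_of_norm_le_re_inner_eq_norm_sq (𝕜 := 𝕜)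
  · simp [norm_smul, ha]
  · rw [inner_smul_right, re_ofReal_mul, h, norm_smul, ha, norm_ofReal, abs_norm]
    ring

end

theorem diaz_metcalf_general {𝕜 H : Type*} [RCLike 𝕜] [NormedAddCommGroup H]
    [InnerProductSpace 𝕜 H] {n : ℕ} (x : Fin n → H)
    (a : H) (ha : ‖a‖ = 1) (r : ℝ) (hr : 0 ≤ r)
    (h : ∀ i, r ≤ re (inner 𝕜 (x i) a : 𝕜) / ‖x i‖) :
    r * ∑ i, ‖x i‖ ≤ ‖∑ i, x i‖ ∧
      (r * ∑ i, ‖x i‖ = ‖∑ i, x i‖ ↔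
        ∑ i, x i = ((r * ∑ i, ‖x i‖ : ℝ) : 𝕜) • a) := by
  have h_le_re : r * ∑ i, ‖x i‖ ≤ re (inner 𝕜 (∑ i, x i) a : 𝕜) := by
    rw [sum_inner, map_sum, mul_sum]
    exact sum_le_sum fun i _ => mul_norm_le_re_inner_of_le_div (h i)
  have h_re_le := re_inner_le_norm_of_norm_eq_one (𝕜 := 𝕜) (∑ i, x i) ha
  refine ⟨h_le_re.trans h_re_le, fun heq => ?_, fun heq => ?_⟩
  · rw [heq]
    exact eq_norm_smul_of_re_inner_eq_norm ha (le_antisymm h_re_le (heq ▸ h_le_re))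
  · rw [heq, norm_smul, ha, mul_one, norm_ofReal, abs_of_nonneg (by positivity)]

/-- Diaz–Metcalf reverse triangle inequality. -/
theorem diaz_metcalf {𝕜 H : Type*} [RCLike 𝕜] [NormedAddCommGroup H]
    [InnerProductSpace 𝕜 H] {n : ℕ} (x : Fin n → H) (hx : ∀ i, x i ≠ 0)
    (a : H) (ha : ‖a‖ = 1) (r : ℝ) (hr : 0 ≤ r)
    (h : ∀ i, r ≤ re (inner 𝕜 (x i) a : 𝕜) / ‖x i‖) :
    r * ∑ i, ‖x i‖ ≤ ‖∑ i, x i‖ ∧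
      (r * ∑ i, ‖x i‖ = ‖∑ i, x i‖ ↔
        ∑ i, x i = ((r * ∑ i, ‖x i‖ : ℝ) : 𝕜) • a) :=
  diaz_metcalf_general x a ha r hr h
end

section
/- Let H be an inner product space over the real or complex numbers and let a₁, …, a_m ∈ H be orthonormal vectors. Suppose x₁, …, xₙ ∈ H are nonzero vectors and r₁, …, r_m ≥ 0 satisfy r_k ≤ Re⟨xᵢ, a_k⟩ / ‖xᵢ‖ for every i ∈ {1, …, n} and k ∈ {1, …, m}. Then (Σ_{k=1}^m r_k²)^{1/2} · Σᵢ₌₁ⁿ ‖xᵢ‖ ≤ ‖Σᵢ₌₁ⁿ xᵢ‖, with equality if and only if Σᵢ₌₁ⁿ xᵢ = (Σᵢ₌₁ⁿ ‖xᵢ‖) Σ_{k=1}^m r_k a_k. -/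
/-!
Put `y = ∑ₖ rₖ aₖ`, `S = ∑ᵢ xᵢ` and `L = ∑ᵢ ‖xᵢ‖`. Orthonormality gives `‖y‖² = ∑ₖ rₖ²`, and the
hypothesis, multiplied by `rₖ ‖xᵢ‖ ≥ 0` and summed, gives `‖y‖² L ≤ Re⟨S, y⟩`. Expanding then yields
`‖S - L y‖² ≤ ‖S‖² - (‖y‖ L)²`, which contains both the inequality `‖y‖ L ≤ ‖S‖` and its
equality case `S = L y`.
-/

open RCLike Finset

section

variable {𝕜 E ι κ : Type*} [RCLike 𝕜] [NormedAddCommGroup E] [InnerProductSpace 𝕜 E]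

theorem Orthonormal.norm_sum_ofReal_smul_sq {a : ι → E} (ha : Orthonormal 𝕜 a) (s : Finset ι)
    (r : ι → ℝ) : ‖∑ k ∈ s, (r k : 𝕜) • a k‖ ^ 2 = ∑ k ∈ s, r k ^ 2 := by
  rw [@norm_sq_eq_re_inner 𝕜, ha.inner_sum, map_sum]
  refine sum_congr rfl fun k _ => ?_
  rw [conj_ofReal, ← ofReal_mul, ofReal_re, sq]

theorem mul_norm_le_re_inner_of_le_div_norm {x a : E} {c : ℝ}
    (h : c ≤ re (inner 𝕜 x a) / ‖x‖) : c * ‖x‖ ≤ re (inner 𝕜 x a) := by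
  rcases eq_or_ne x 0 with rfl | hx
  · simp
  · exact (le_div_iff₀ (norm_pos_iff.mpr hx)).mp h

theorem sum_sq_mul_sum_norm_le_re_inner_sum {s : Finset ι} {t : Finset κ} {x : ι → E}
    {a : κ → E} {r : κ → ℝ} (hr : ∀ k ∈ t, 0 ≤ r k)
    (h : ∀ i ∈ s, ∀ k ∈ t, r k * ‖x i‖ ≤ re (inner 𝕜 (x i) (a k))) :
    (∑ k ∈ t, r k ^ 2) * ∑ i ∈ s, ‖x i‖ ≤
      re (inner 𝕜 (∑ i ∈ s, x i) (∑ k ∈ t, (r k : 𝕜) • a k)) := by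
  have hre : re (inner 𝕜 (∑ i ∈ s, x i) (∑ k ∈ t, (r k : 𝕜) • a k)) =
      ∑ k ∈ t, r k * ∑ i ∈ s, re (inner 𝕜 (x i) (a k)) := by
    simp only [inner_sum, sum_inner, inner_smul_right, map_sum, re_ofReal_mul]
  rw [hre, sum_mul]
  refine sum_le_sum fun k hk => ?_
  rw [sq, mul_assoc, mul_sum]
  exact mul_le_mul_of_nonneg_left (sum_le_sum fun i hi => h i hi k hk) (hr k hk)

variable {S y : E} {L : ℝ}

theorem norm_sub_smul_sq_le_of_sq_mul_le_re_inner (hL : 0 ≤ L)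
    (h : ‖y‖ ^ 2 * L ≤ re (inner 𝕜 S y)) :
    ‖S - (L : 𝕜) • y‖ ^ 2 ≤ ‖S‖ ^ 2 - (‖y‖ * L) ^ 2 := by
  rw [@norm_sub_sq 𝕜, inner_smul_right, re_ofReal_mul, norm_smul, norm_ofReal, abs_of_nonneg hL]
  nlinarith [mul_le_mul_of_nonneg_left h hL]

theorem norm_mul_le_norm_of_sq_mul_le_re_inner (hL : 0 ≤ L)
    (h : ‖y‖ ^ 2 * L ≤ re (inner 𝕜 S y)) : ‖y‖ * L ≤ ‖S‖ := by
  have := norm_sub_smul_sq_le_of_sq_mul_le_re_inner hL h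
  have : (‖y‖ * L) ^ 2 ≤ ‖S‖ ^ 2 := by nlinarith [sq_nonneg ‖S - (L : 𝕜) • y‖]
  exact (pow_le_pow_iff_left₀ (by positivity) (norm_nonneg S) two_ne_zero).mp this

theorem norm_mul_eq_norm_iff_of_sq_mul_le_re_inner (hL : 0 ≤ L)
    (h : ‖y‖ ^ 2 * L ≤ re (inner 𝕜 S y)) : ‖y‖ * L = ‖S‖ ↔ S = (L : 𝕜) • y := by
  constructor
  · intro heq
    have := norm_sub_smul_sq_le_of_sq_mul_le_re_inner hL h
    rw [heq, sub_self, sq_nonpos_iff, norm_eq_zero, sub_eq_zero] at this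
    exact this
  · rintro rfl
    rw [norm_smul, norm_ofReal, abs_of_nonneg hL, mul_comm]

end

theorem diaz_metcalf_orthonormal_general {𝕜 H : Type*} [RCLike 𝕜] [NormedAddCommGroup H]
    [InnerProductSpace 𝕜 H] {n m : ℕ} (x : Fin n → H)
    (a : Fin m → H) (ha : Orthonormal 𝕜 a) (r : Fin m → ℝ) (hr : ∀ k, 0 ≤ r k)
    (h : ∀ i k, r k ≤ re (inner 𝕜 (x i) (a k) : 𝕜) / ‖x i‖) :
    Real.sqrt (∑ k, r k ^ 2) * ∑ i, ‖x i‖ ≤ ‖∑ i, x i‖ ∧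
      (Real.sqrt (∑ k, r k ^ 2) * ∑ i, ‖x i‖ = ‖∑ i, x i‖ ↔
        ∑ i, x i = ((∑ i, ‖x i‖ : ℝ) : 𝕜) • ∑ k, ((r k : ℝ) : 𝕜) • a k) := by
  have hL : 0 ≤ ∑ i, ‖x i‖ := sum_nonneg fun i _ => norm_nonneg (x i)
  have hre := sum_sq_mul_sum_norm_le_re_inner_sum (s := univ) (t := univ) (fun k _ => hr k)
    fun i _ k _ => mul_norm_le_re_inner_of_le_div_norm (h i k)
  rw [← ha.norm_sum_ofReal_smul_sq] at hre ⊢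
  rw [Real.sqrt_sq (norm_nonneg _)]
  exact ⟨norm_mul_le_norm_of_sq_mul_le_re_inner hL hre,
    norm_mul_eq_norm_iff_of_sq_mul_le_re_inner hL hre⟩

/-- Diaz–Metcalf reverse triangle inequality for orthonormal families. -/
theorem diaz_metcalf_orthonormal {𝕜 H : Type*} [RCLike 𝕜] [NormedAddCommGroup H]
    [InnerProductSpace 𝕜 H] {n m : ℕ} (x : Fin n → H) (hx : ∀ i, x i ≠ 0)
    (a : Fin m → H) (ha : Orthonormal 𝕜 a) (r : Fin m → ℝ) (hr : ∀ k, 0 ≤ r k)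
    (h : ∀ i k, r k ≤ re (inner 𝕜 (x i) (a k) : 𝕜) / ‖x i‖) :
    Real.sqrt (∑ k, r k ^ 2) * ∑ i, ‖x i‖ ≤ ‖∑ i, x i‖ ∧
      (Real.sqrt (∑ k, r k ^ 2) * ∑ i, ‖x i‖ = ‖∑ i, x i‖ ↔
        ∑ i, x i = ((∑ i, ‖x i‖ : ℝ) : 𝕜) • ∑ k, ((r k : ℝ) : 𝕜) • a k) :=
  diaz_metcalf_orthonormal_general x a ha r hr h
end

section
/- Let H be an inner product space over the real or complex numbers, let a ∈ H be a unit vector, and let ρ ∈ (0,1). If x₁, …, xₙ ∈ H satisfy ‖xᵢ − a‖ ≤ ρ for each i ∈ {1, …, n}, then √(1 − ρ²) · Σᵢ₌₁ⁿ ‖xᵢ‖ ≤ ‖Σᵢ₌₁ⁿ xᵢ‖, with equality if and only if Σᵢ₌₁ⁿ xᵢ = √(1 − ρ²) (Σᵢ₌₁ⁿ ‖xᵢ‖) a. -/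
/-!
Expanding `‖x - a‖² ≤ ρ²` gives `2 re ⟪x, a⟫ ≥ ‖x‖² + (1 - ρ²) ≥ 2 √(1 - ρ²) ‖x‖` by AM-GM, and
summing over `i` bounds `c := √(1 - ρ²) ∑ ‖xᵢ‖` by `re ⟪∑ xᵢ, a⟫`. For any `u` with
`0 ≤ c ≤ re ⟪u, a⟫` one has `‖u - c a‖² = ‖u‖² - 2 c re ⟪u, a⟫ + c² ≤ ‖u‖² - c²`, which yields
both `c ≤ ‖u‖` and, when `c = ‖u‖`, `u = c a`.
-/

open RCLike Finset
open scoped InnerProductSpace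

section

variable {𝕜 H : Type*} [RCLike 𝕜] [NormedAddCommGroup H] [InnerProductSpace 𝕜 H]

theorem sqrt_one_sub_sq_mul_norm_le_re_inner {x a : H} (ha : ‖a‖ = 1) {ρ : ℝ} (hρ : ρ ≤ 1)
    (hx : ‖x - a‖ ≤ ρ) : Real.sqrt (1 - ρ ^ 2) * ‖x‖ ≤ re ⟪x, a⟫_𝕜 := by
  have hρ₀ : 0 ≤ ρ := (norm_nonneg _).trans hx
  have hs : Real.sqrt (1 - ρ ^ 2) ^ 2 = 1 - ρ ^ 2 := Real.sq_sqrt (by nlinarith)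
  have hexp : ‖x - a‖ ^ 2 = ‖x‖ ^ 2 - 2 * re ⟪x, a⟫_𝕜 + ‖a‖ ^ 2 := norm_sub_sq _ _
  have hsq : ‖x - a‖ ^ 2 ≤ ρ ^ 2 := pow_le_pow_left₀ (norm_nonneg _) hx 2
  nlinarith [sq_nonneg (‖x‖ - Real.sqrt (1 - ρ ^ 2))]

theorem norm_sub_smul_sq_le_of_le_re_inner {u a : H} (ha : ‖a‖ = 1) {c : ℝ} (hc : 0 ≤ c)
    (hcu : c ≤ re ⟪u, a⟫_𝕜) : ‖u - (c : 𝕜) • a‖ ^ 2 ≤ ‖u‖ ^ 2 - c ^ 2 := by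
  have hexp : ‖u - (c : 𝕜) • a‖ ^ 2 = ‖u‖ ^ 2 - 2 * c * re ⟪u, a⟫_𝕜 + c ^ 2 := by
    rw [norm_sub_sq (𝕜 := 𝕜), inner_smul_right, re_ofReal_mul, norm_smul, norm_ofReal, ha,
      abs_of_nonneg hc]
    ring
  nlinarith

theorem le_norm_and_eq_iff_of_le_re_inner {u a : H} (ha : ‖a‖ = 1) {c : ℝ} (hc : 0 ≤ c)
    (hcu : c ≤ re ⟪u, a⟫_𝕜) : c ≤ ‖u‖ ∧ (c = ‖u‖ ↔ u = (c : 𝕜) • a) := by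
  have hsq := norm_sub_smul_sq_le_of_le_re_inner ha hc hcu
  have hsq' : c ^ 2 ≤ ‖u‖ ^ 2 := by nlinarith [sq_nonneg ‖u - (c : 𝕜) • a‖]
  refine ⟨(pow_le_pow_iff_left₀ hc (norm_nonneg u) two_ne_zero).1 hsq', fun hc_eq => ?_,
    fun hu => ?_⟩
  · rw [← sub_eq_zero, ← norm_eq_zero, ← sq_eq_zero_iff]
    nlinarith [sq_nonneg ‖u - (c : 𝕜) • a‖]
  · rw [hu, norm_smul, norm_ofReal, ha, mul_one, abs_of_nonneg hc]

end

theorem reverse_triangle_ball {𝕜 H : Type*} [RCLike 𝕜] [NormedAddCommGroup H]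
    [InnerProductSpace 𝕜 H] {n : ℕ} (x : Fin n → H)
    (a : H) (ha : ‖a‖ = 1) (ρ : ℝ) (hρ : ρ ∈ Set.Ioo (0 : ℝ) 1)
    (h : ∀ i, ‖x i - a‖ ≤ ρ) :
    Real.sqrt (1 - ρ ^ 2) * ∑ i, ‖x i‖ ≤ ‖∑ i, x i‖ ∧
      (Real.sqrt (1 - ρ ^ 2) * ∑ i, ‖x i‖ = ‖∑ i, x i‖ ↔
        ∑ i, x i = ((Real.sqrt (1 - ρ ^ 2) * ∑ i, ‖x i‖ : ℝ) : 𝕜) • a) := by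
  have hre : Real.sqrt (1 - ρ ^ 2) * ∑ i, ‖x i‖ ≤ re ⟪∑ i, x i, a⟫_𝕜 := by
    rw [sum_inner, map_sum, mul_sum]
    exact sum_le_sum fun i _ => sqrt_one_sub_sq_mul_norm_le_re_inner ha hρ.2.le (h i)
  exact le_norm_and_eq_iff_of_le_re_inner ha (by positivity) hre
end

section
/- Let H be an inner product space over the real or complex numbers, let a ∈ H be a unit vector, and let M ≥ m > 0. If x₁, …, xₙ ∈ H satisfy Re⟨M a − xᵢ, xᵢ − m a⟩ ≥ 0 for each i ∈ {1, …, n}, then Σᵢ₌₁ⁿ ‖xᵢ‖ − ‖Σᵢ₌₁ⁿ xᵢ‖ ≤ ((√M − √m)² / (2√(mM))) · ‖Σᵢ₌₁ⁿ xᵢ‖. -/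
/-!
Expanding the hypothesis gives `‖xᵢ‖² + mM ≤ (m + M) Re⟨xᵢ, a⟩`, and AM-GM bounds the left side
below by `2√(mM) ‖xᵢ‖`. Summing over `i` and using `Re⟨∑ xᵢ, a⟩ ≤ ‖∑ xᵢ‖` yields
`2√(mM) ∑ ‖xᵢ‖ ≤ (m + M) ‖∑ xᵢ‖`, which is the claim since
`(m + M) / (2√(mM)) - 1 = (√M - √m)² / (2√(mM))`.
-/

open RCLike Finset

section InnerProductSpace

variable {𝕜 H : Type*} [RCLike 𝕜] [NormedAddCommGroup H] [InnerProductSpace 𝕜 H]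

theorem re_inner_smul_sub_sub_smul (x a : H) (m M : ℝ) :
    re (inner 𝕜 ((M : 𝕜) • a - x) (x - (m : 𝕜) • a) : 𝕜) =
      (m + M) * re (inner 𝕜 x a : 𝕜) - ‖x‖ ^ 2 - m * M * ‖a‖ ^ 2 := by
  simp only [inner_sub_left, inner_sub_right, inner_smul_left, inner_smul_right, map_sub,
    conj_ofReal, re_ofReal_mul]
  rw [inner_re_symm a x, inner_self_eq_norm_sq, inner_self_eq_norm_sq]
  ring

theorem two_sqrt_mul_mul_norm_le_re_inner {x a : H} (ha : ‖a‖ = 1) {m M : ℝ} (hmM : 0 ≤ m * M)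
    (h : 0 ≤ re (inner 𝕜 ((M : 𝕜) • a - x) (x - (m : 𝕜) • a) : 𝕜)) :
    2 * Real.sqrt (m * M) * ‖x‖ ≤ (m + M) * re (inner 𝕜 x a : 𝕜) := by
  rw [re_inner_smul_sub_sub_smul, ha] at h
  have amgm : 2 * Real.sqrt (m * M) * ‖x‖ ≤ ‖x‖ ^ 2 + m * M := by
    nlinarith [sq_nonneg (‖x‖ - Real.sqrt (m * M)), Real.sq_sqrt hmM]
  linarith

theorem two_sqrt_mul_mul_sum_norm_le_norm_sum {ι : Type*} (s : Finset ι) (x : ι → H) {a : H}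
    (ha : ‖a‖ = 1) {m M : ℝ} (hm : 0 ≤ m) (hM : 0 ≤ M)
    (h : ∀ i ∈ s, 0 ≤ re (inner 𝕜 ((M : 𝕜) • a - x i) (x i - (m : 𝕜) • a) : 𝕜)) :
    2 * Real.sqrt (m * M) * ∑ i ∈ s, ‖x i‖ ≤ (m + M) * ‖∑ i ∈ s, x i‖ :=
  calc 2 * Real.sqrt (m * M) * ∑ i ∈ s, ‖x i‖
      ≤ (m + M) * re (inner 𝕜 (∑ i ∈ s, x i) a : 𝕜) := by
        rw [sum_inner, map_sum, mul_sum, mul_sum]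
        exact sum_le_sum fun i hi =>
          two_sqrt_mul_mul_norm_le_re_inner ha (mul_nonneg hm hM) (h i hi)
    _ ≤ (m + M) * ‖∑ i ∈ s, x i‖ := by
        gcongr
        simpa [ha] using re_inner_le_norm (𝕜 := 𝕜) (∑ i ∈ s, x i) a

end InnerProductSpace

theorem sq_sqrt_sub_sqrt_div_eq {m M : ℝ} (hm : 0 < m) (hM : 0 < M) :
    (Real.sqrt M - Real.sqrt m) ^ 2 / (2 * Real.sqrt (m * M)) =
      (m + M) / (2 * Real.sqrt (m * M)) - 1 := by
  have hsm := Real.sqrt_pos.mpr hm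
  have hsM := Real.sqrt_pos.mpr hM
  rw [Real.sqrt_mul hm.le, eq_sub_iff_add_eq, div_add_one (by positivity), sub_sq,
    Real.sq_sqrt hm.le, Real.sq_sqrt hM.le]
  ring

theorem reverse_triangle_mM_additive {𝕜 H : Type*} [RCLike 𝕜] [NormedAddCommGroup H]
    [InnerProductSpace 𝕜 H] {n : ℕ} (x : Fin n → H)
    (a : H) (ha : ‖a‖ = 1) (m M : ℝ) (hm : 0 < m) (hmM : m ≤ M)
    (h : ∀ i, 0 ≤ re (inner 𝕜 ((M : 𝕜) • a - x i) (x i - (m : 𝕜) • a) : 𝕜)) :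
    ∑ i, ‖x i‖ - ‖∑ i, x i‖ ≤
      (Real.sqrt M - Real.sqrt m) ^ 2 / (2 * Real.sqrt (m * M)) * ‖∑ i, x i‖ := by
  have hM : 0 < M := hm.trans_le hmM
  have hsum := two_sqrt_mul_mul_sum_norm_le_norm_sum univ x ha hm.le hM.le fun i _ => h i
  have hpos : 0 < 2 * Real.sqrt (m * M) := by positivity
  rw [sq_sqrt_sub_sqrt_div_eq hm hM, sub_mul, one_mul, sub_le_sub_iff_right,
    div_mul_eq_mul_div, le_div_iff₀ hpos]
  linarith
end

section
/- Let H be an inner product space over the real or complex numbers and let x, z, Z ∈ H. Then Re⟨Z − x, x − z⟩ ≥ 0 if and only if ‖x − (Z + z)/2‖ ≤ (1/2)‖Z − z‖. -/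
open RCLike

/-
Put `a = Z - x` and `b = x - z`. Then `Z - z = a + b` and `x - (Z + z)/2 = (b - a)/2`, so by
polarization `‖x - (Z + z)/2‖² = ‖(Z - z)/2‖² - Re⟨a, b⟩`.
-/

theorem sub_inv_two_smul_add_eq {𝕜 V : Type*} [Field 𝕜] [CharZero 𝕜] [AddCommGroup V]
    [Module 𝕜 V] (x z Z : V) :
    x - (2 : 𝕜)⁻¹ • (Z + z) = (2 : 𝕜)⁻¹ • ((x - z) - (Z - x)) := by
  match_scalars <;> ring

theorem norm_sub_inv_two_smul_add_mul_self {𝕜 H : Type*} [RCLike 𝕜] [NormedAddCommGroup H]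
    [InnerProductSpace 𝕜 H] (x z Z : H) :
    ‖x - (2 : 𝕜)⁻¹ • (Z + z)‖ * ‖x - (2 : 𝕜)⁻¹ • (Z + z)‖ =
      2⁻¹ * ‖Z - z‖ * (2⁻¹ * ‖Z - z‖) - re (inner 𝕜 (Z - x) (x - z)) := by
  rw [sub_inv_two_smul_add_eq, norm_smul, norm_inv, RCLike.norm_ofNat,
    re_inner_eq_norm_add_mul_self_sub_norm_sub_mul_self_div_four, sub_add_sub_cancel,
    norm_sub_rev (x - z)]
  ring

theorem re_inner_nonneg_iff_norm_le {𝕜 H : Type*} [RCLike 𝕜] [NormedAddCommGroup H]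
    [InnerProductSpace 𝕜 H] (x z Z : H) :
    0 ≤ re (inner 𝕜 (Z - x) (x - z) : 𝕜) ↔
      ‖x - (2 : 𝕜)⁻¹ • (Z + z)‖ ≤ 2⁻¹ * ‖Z - z‖ := by
  rw [mul_self_le_mul_self_iff (norm_nonneg _) (by positivity),
    norm_sub_inv_two_smul_add_mul_self]
  constructor <;> intro h <;> linarith
end

section
/- Let H be an inner product space over the real or complex numbers, let e ∈ H with ‖e‖ = 1, and let x₁, …, xₙ ∈ H. If k₁, …, kₙ ≥ 0 satisfy ‖xᵢ‖ − Re⟨e, xᵢ⟩ ≤ kᵢ for each i ∈ {1, …, n}, then 0 ≤ Σᵢ₌₁ⁿ ‖xᵢ‖ − ‖Σᵢ₌₁ⁿ xᵢ‖ ≤ Σᵢ₌₁ⁿ kᵢ. Moreover, equality Σᵢ₌₁ⁿ ‖xᵢ‖ − ‖Σᵢ₌₁ⁿ xᵢ‖ = Σᵢ₌₁ⁿ kᵢ holds if and only if Σᵢ₌₁ⁿ ‖xᵢ‖ ≥ Σᵢ₌₁ⁿ kᵢ and Σᵢ₌₁ⁿ xᵢ = (Σᵢ₌₁ⁿ ‖xᵢ‖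 − Σᵢ₌₁ⁿ kᵢ) e. -/
/-!
Summing the hypotheses gives `∑ ‖xᵢ‖ - ∑ kᵢ ≤ Re ⟪e, ∑ xᵢ⟫ ≤ ‖∑ xᵢ‖`, which is the upper bound.
Equality forces `Re ⟪e, ∑ xᵢ⟫ = ‖∑ xᵢ‖`, the equality case of Cauchy–Schwarz, so `∑ xᵢ` is a
nonnegative multiple of `e`.
-/

open RCLike Finset

open scoped InnerProductSpace

section UnitVector

variable {𝕜 H : Type*} [RCLike 𝕜] [NormedAddCommGroup H] [InnerProductSpace 𝕜 H]
  {e : H}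

theorem re_inner_le_norm_of_norm_eq_one_s9 (he : ‖e‖ = 1) (y : H) : re ⟪e, y⟫_𝕜 ≤ ‖y‖ := by
  simpa [he] using re_inner_le_norm e y

theorem norm_eq_iff_eq_smul_of_le_re_inner (he : ‖e‖ = 1) {y : H} {c : ℝ}
    (hc : c ≤ re ⟪e, y⟫_𝕜) : ‖y‖ = c ↔ 0 ≤ c ∧ y = (c : 𝕜) • e := by
  constructor
  · rintro rfl
    refine ⟨norm_nonneg y, eq_of_norm_le_re_inner_eq_norm_sq (𝕜 := 𝕜) ?_ ?_⟩
    · simp [norm_smul, he]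
    · have hre : re ⟪e, y⟫_𝕜 = ‖y‖ := le_antisymm (re_inner_le_norm_of_norm_eq_one_s9 he y) hc
      rw [inner_smul_right, re_ofReal_mul, inner_re_symm, hre, norm_smul, norm_ofReal, he,
        abs_norm, mul_one, sq]
  · rintro ⟨hc₀, rfl⟩
    simp [norm_smul, he, abs_of_nonneg hc₀]

theorem sum_sub_sum_le_re_inner_sum {ι : Type*} (s : Finset ι) (x : ι → H) (k : ι → ℝ)
    (h : ∀ i ∈ s, ‖x i‖ - re ⟪e, x i⟫_𝕜 ≤ k i) :
    ∑ i ∈ s, ‖x i‖ - ∑ i ∈ s, k i ≤ re ⟪e, ∑ i ∈ s, x i⟫_𝕜 := by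
  rw [inner_sum, map_sum, ← sum_sub_distrib]
  exact sum_le_sum fun i hi => by linarith [h i hi]

end UnitVector

theorem additive_reverse_triangle_general {𝕜 H : Type*} [RCLike 𝕜] [NormedAddCommGroup H]
    [InnerProductSpace 𝕜 H] {n : ℕ} (e : H) (he : ‖e‖ = 1)
    (x : Fin n → H) (k : Fin n → ℝ)
    (h : ∀ i, ‖x i‖ - re (inner 𝕜 e (x i) : 𝕜) ≤ k i) :
    (0 ≤ ∑ i, ‖x i‖ - ‖∑ i, x i‖ ∧ ∑ i, ‖x i‖ - ‖∑ i, x i‖ ≤ ∑ i, k i) ∧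
      (∑ i, ‖x i‖ - ‖∑ i, x i‖ = ∑ i, k i ↔
        ∑ i, k i ≤ ∑ i, ‖x i‖ ∧
          ∑ i, x i = ((∑ i, ‖x i‖ - ∑ i, k i : ℝ) : 𝕜) • e) := by
  have hc := sum_sub_sum_le_re_inner_sum univ x k fun i _ => h i
  have hle := re_inner_le_norm_of_norm_eq_one_s9 (𝕜 := 𝕜) he (∑ i, x i)
  refine ⟨⟨sub_nonneg.2 (norm_sum_le _ _), by linarith⟩, ?_⟩
  rw [← sub_nonneg, ← norm_eq_iff_eq_smul_of_le_re_inner he hc,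
    eq_sub_iff_add_eq, sub_eq_iff_eq_add', eq_comm]

theorem additive_reverse_triangle {𝕜 H : Type*} [RCLike 𝕜] [NormedAddCommGroup H]
    [InnerProductSpace 𝕜 H] {n : ℕ} (e : H) (he : ‖e‖ = 1)
    (x : Fin n → H) (k : Fin n → ℝ) (hk : ∀ i, 0 ≤ k i)
    (h : ∀ i, ‖x i‖ - re (inner 𝕜 e (x i) : 𝕜) ≤ k i) :
    (0 ≤ ∑ i, ‖x i‖ - ‖∑ i, x i‖ ∧ ∑ i, ‖x i‖ - ‖∑ i, x i‖ ≤ ∑ i, k i) ∧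
      (∑ i, ‖x i‖ - ‖∑ i, x i‖ = ∑ i, k i ↔
        ∑ i, k i ≤ ∑ i, ‖x i‖ ∧
          ∑ i, x i = ((∑ i, ‖x i‖ - ∑ i, k i : ℝ) : 𝕜) • e) :=
  additive_reverse_triangle_general e he x k h
end

section
/- Let H be an inner product space over the real or complex numbers, let e₁, …, e_m ∈ H be orthonormal vectors, and let x₁, …, xₙ ∈ H. If M_{ik} ≥ 0 satisfy ‖xᵢ‖ − Re⟨e_k, xᵢ⟩ ≤ M_{ik} for each i ∈ {1, …, n} and k ∈ {1, …, m}, then Σᵢ₌₁ⁿ ‖xᵢ‖ ≤ (1/√m) ‖Σᵢ₌₁ⁿ xᵢ‖ + (1/m) Σᵢ₌₁ⁿ Σ_{k=1}^m M_{ik}. Equality holds if and only if Σᵢ₌₁ⁿ ‖xᵢ‖ ≥ (1/m) Σᵢ₌₁ⁿ Σ_{k=1}^m M_{ik} and Σᵢ₌₁ⁿ xᵢ = (Σᵢ₌₁ⁿ ‖xᵢ‖ − (1/m) Σᵢ₌₁ⁿ Σ_{k=1}^m M_{ik}) Σ_{k=1}^m e_k. -/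
/-!
Sum the hypotheses over `k`. With `E = ∑ k, e k` and `S = ∑ i, x i` this gives
`m * ∑ i, ‖x i‖ - re ⟪E, S⟫ ≤ ∑ i, ∑ k, M i k`, and Cauchy–Schwarz with `‖E‖ = √m` bounds
`re ⟪E, S⟫ ≤ √m * ‖S‖`. Equality in the result forces equality in both steps, and equality in
Cauchy–Schwarz makes `S` a nonnegative multiple of `E`.
-/

open RCLike Finset

section

variable {𝕜 H : Type*} [RCLike 𝕜] [NormedAddCommGroup H] [InnerProductSpace 𝕜 H]

theorem Orthonormal.norm_sum_eq_sqrt_card {κ : Type*} [Fintype κ] {e : κ → H}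
    (he : Orthonormal 𝕜 e) : ‖∑ k, e k‖ = √(Fintype.card κ) := by
  have h := he.inner_sum (fun _ => 1) (fun _ => 1) univ
  simp only [one_smul, map_one, mul_one, sum_const, card_univ, nsmul_eq_mul] at h
  rw [norm_eq_sqrt_re_inner (𝕜 := 𝕜), h, natCast_re]

theorem card_mul_sum_norm_sub_re_inner_sum_le {ι κ : Type*} [Fintype ι] [Fintype κ]
    {e : κ → H} {x : ι → H} {M : ι → κ → ℝ}
    (h : ∀ i k, ‖x i‖ - re (inner 𝕜 (e k) (x i) : 𝕜) ≤ M i k) :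
    Fintype.card κ * ∑ i, ‖x i‖ - re (inner 𝕜 (∑ k, e k) (∑ i, x i) : 𝕜) ≤
      ∑ i, ∑ k, M i k := by
  calc Fintype.card κ * ∑ i, ‖x i‖ - re (inner 𝕜 (∑ k, e k) (∑ i, x i) : 𝕜)
      = ∑ i, ∑ k, (‖x i‖ - re (inner 𝕜 (e k) (x i) : 𝕜)) := by
        simp only [sum_inner, inner_sum, map_sum, sum_sub_distrib, sum_const, card_univ,
          nsmul_eq_mul, mul_sum]
    _ ≤ ∑ i, ∑ k, M i k := sum_le_sum fun i _ => sum_le_sum fun k _ => h i k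

-- The hypotheses force equality in Cauchy–Schwarz, `re ⟪u, v⟫ = ‖u‖ * ‖v‖`.
theorem eq_ofReal_smul_of_norm_le_of_le_re_inner {c : ℝ} (hc : 0 ≤ c) {u v : H}
    (hnorm : ‖v‖ ≤ c * ‖u‖) (hre : c * ‖u‖ ^ 2 ≤ re (inner 𝕜 u v : 𝕜)) :
    v = (c : 𝕜) • u := by
  have hcs := re_inner_le_norm (𝕜 := 𝕜) u v
  have hnorm' : ‖(c : 𝕜) • u‖ = c * ‖u‖ := by
    rw [norm_smul, norm_ofReal, abs_of_nonneg hc]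
  refine eq_of_norm_le_re_inner_eq_norm_sq (𝕜 := 𝕜) (hnorm.trans_eq hnorm'.symm) ?_
  have heq : re (inner 𝕜 u v : 𝕜) = c * ‖u‖ ^ 2 := by
    nlinarith [mul_le_mul_of_nonneg_left hnorm (norm_nonneg u)]
  rw [inner_smul_right, re_ofReal_mul, inner_re_symm, heq, hnorm']
  ring

end

theorem additive_reverse_triangle_orthonormal_general {𝕜 H : Type*} [RCLike 𝕜]
    [NormedAddCommGroup H] [InnerProductSpace 𝕜 H] {n m : ℕ} (hm : 0 < m)
    (e : Fin m → H) (he : Orthonormal 𝕜 e)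
    (x : Fin n → H) (M : Fin n → Fin m → ℝ)
    (h : ∀ i k, ‖x i‖ - re (inner 𝕜 (e k) (x i) : 𝕜) ≤ M i k) :
    (∑ i, ‖x i‖ ≤ (1 / Real.sqrt m) * ‖∑ i, x i‖ + (1 / m) * ∑ i, ∑ k, M i k) ∧
      (∑ i, ‖x i‖ = (1 / Real.sqrt m) * ‖∑ i, x i‖ + (1 / m) * ∑ i, ∑ k, M i k ↔
        (1 / m) * ∑ i, ∑ k, M i k ≤ ∑ i, ‖x i‖ ∧
          ∑ i, x i = ((∑ i, ‖x i‖ - (1 / m) * ∑ i, ∑ k, M i k : ℝ) : 𝕜) •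
            ∑ k, e k) := by
  set E := ∑ k, e k
  set S := ∑ i, x i
  set d := ∑ i, ‖x i‖ - (1 / m) * ∑ i, ∑ k, M i k with hd
  have hnE : ‖E‖ = √m := by simpa using he.norm_sum_eq_sqrt_card
  have hsqrt : 0 < √(m : ℝ) := Real.sqrt_pos.mpr (Nat.cast_pos.mpr hm)
  have hsqrt_sq : √(m : ℝ) ^ 2 = m := Real.sq_sqrt (Nat.cast_nonneg m)
  have hgap : m * d ≤ re (inner 𝕜 E S : 𝕜) := by
    have := card_mul_sum_norm_sub_re_inner_sum_le h
    rw [Fintype.card_fin] at this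
    rw [hd, mul_sub, ← mul_assoc, mul_one_div_cancel (Nat.cast_pos.mpr hm).ne', one_mul]
    linarith
  have hcs : re (inner 𝕜 E S : 𝕜) ≤ √m * ‖S‖ := hnE ▸ re_inner_le_norm E S
  have hdS : d * √m ≤ ‖S‖ := by
    refine le_of_mul_le_mul_left ?_ hsqrt
    calc √m * (d * √m) = m * d := by linear_combination d * hsqrt_sq
      _ ≤ √m * ‖S‖ := hgap.trans hcs
  have heq_iff : ∑ i, ‖x i‖ = 1 / √m * ‖S‖ + (1 / m) * ∑ i, ∑ k, M i k ↔ d * √m = ‖S‖ := by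
    rw [← sub_eq_iff_eq_add, ← hd, one_div_mul_eq_div, eq_div_iff hsqrt.ne']
  refine ⟨?_, heq_iff.trans ⟨fun hSd => ?_, fun ⟨hTs, hSE⟩ => ?_⟩⟩
  · rw [← sub_le_iff_le_add, ← hd, one_div_mul_eq_div, le_div_iff₀ hsqrt]
    exact hdS
  · have hd0 : 0 ≤ d := nonneg_of_mul_nonneg_left (hSd ▸ norm_nonneg S) hsqrt
    refine ⟨by linarith, eq_ofReal_smul_of_norm_le_of_le_re_inner hd0 ?_ ?_⟩
    · rw [hnE, hSd]
    · rw [hnE, hsqrt_sq, mul_comm]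
      exact hgap
  · rw [hSE, norm_smul, norm_ofReal, abs_of_nonneg (by linarith), hnE]

theorem additive_reverse_triangle_orthonormal {𝕜 H : Type*} [RCLike 𝕜]
    [NormedAddCommGroup H] [InnerProductSpace 𝕜 H] {n m : ℕ} (hm : 0 < m)
    (e : Fin m → H) (he : Orthonormal 𝕜 e)
    (x : Fin n → H) (M : Fin n → Fin m → ℝ) (hM : ∀ i k, 0 ≤ M i k)
    (h : ∀ i k, ‖x i‖ - re (inner 𝕜 (e k) (x i) : 𝕜) ≤ M i k) :
    (∑ i, ‖x i‖ ≤ (1 / Real.sqrt m) * ‖∑ i, x i‖ + (1 / m) * ∑ i, ∑ k, M i k) ∧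
      (∑ i, ‖x i‖ = (1 / Real.sqrt m) * ‖∑ i, x i‖ + (1 / m) * ∑ i, ∑ k, M i k ↔
        (1 / m) * ∑ i, ∑ k, M i k ≤ ∑ i, ‖x i‖ ∧
          ∑ i, x i = ((∑ i, ‖x i‖ - (1 / m) * ∑ i, ∑ k, M i k : ℝ) : 𝕜) •
            ∑ k, e k) :=
  additive_reverse_triangle_orthonormal_general hm e he x M h
end

section
/- Let H be an inner product space over the real or complex numbers, let e ∈ H with ‖e‖ = 1, let ρ ∈ (0,1), and let x ∈ H satisfy ‖x − e‖ ≤ ρ. Then ‖x‖ ≤ (1/√(1 − ρ²)) · Re⟨x, e⟩. -/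
open RCLike

/-- Expanding `‖x - e‖²` gives `‖x‖² + s² ≤ 2 re ⟪x, e⟫`, and AM-GM gives `2 s ‖x‖ ≤ ‖x‖² + s²`. -/
theorem mul_norm_le_re_inner_of_norm_sub_sq_add_sq_le {𝕜 H : Type*} [RCLike 𝕜]
    [NormedAddCommGroup H] [InnerProductSpace 𝕜 H] {x e : H} {s : ℝ}
    (h : ‖x - e‖ ^ 2 + s ^ 2 ≤ ‖e‖ ^ 2) :
    s * ‖x‖ ≤ re (inner 𝕜 x e : 𝕜) := by
  have hexpand : ‖x‖ ^ 2 + s ^ 2 ≤ 2 * re (inner 𝕜 x e : 𝕜) := by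
    rw [@norm_sub_sq 𝕜] at h
    linarith
  nlinarith [sq_nonneg (‖x‖ - s)]

theorem norm_le_re_inner_div_sqrt {𝕜 H : Type*} [RCLike 𝕜] [NormedAddCommGroup H]
    [InnerProductSpace 𝕜 H] (e : H) (he : ‖e‖ = 1) (ρ : ℝ)
    (hρ : ρ ∈ Set.Ioo (0 : ℝ) 1) (x : H) (h : ‖x - e‖ ≤ ρ) :
    ‖x‖ ≤ (1 / Real.sqrt (1 - ρ ^ 2)) * re (inner 𝕜 x e : 𝕜) := by
  obtain ⟨hρ0, hρ1⟩ := hρ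
  have hpos : 0 < 1 - ρ ^ 2 := by nlinarith
  have hsq : ‖x - e‖ ^ 2 ≤ ρ ^ 2 := pow_le_pow_left₀ (norm_nonneg _) h 2
  have hmul : Real.sqrt (1 - ρ ^ 2) * ‖x‖ ≤ re (inner 𝕜 x e : 𝕜) := by
    apply mul_norm_le_re_inner_of_norm_sub_sq_add_sq_le
    rw [Real.sq_sqrt hpos.le, he]
    linarith
  rw [one_div_mul_eq_div, le_div_iff₀ (Real.sqrt_pos.mpr hpos)]
  linarith
end

section
/- Let H be an inner product space over the real or complex numbers, let e ∈ H with ‖e‖ = 1, and let r₁, …, rₙ > 0. If x₁, …, xₙ ∈ H satisfy ‖xᵢ − e‖ ≤ rᵢ for each i ∈ {1, …, n}, then 0 ≤ Σᵢ₌₁ⁿ ‖xᵢ‖ − ‖Σᵢ₌₁ⁿ xᵢ‖ ≤ (1/2) Σᵢ₌₁ⁿ rᵢ². Equality in the second inequality holds if and only if Σᵢ₌₁ⁿ ‖xᵢ‖ ≥ (1/2) Σᵢ₌₁ⁿ rᵢ² and Σᵢ₌₁ⁿ xᵢ = (Σᵢ₌₁ⁿ ‖xᵢ‖ − (1/2)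 Σᵢ₌₁ⁿ rᵢ²) e. -/
/-!
Since `‖e‖ = 1`, `‖x - e‖² = ‖x‖² + 1 - 2 re ⟪x, e⟫ ≥ 2 (‖x‖ - re ⟪x, e⟫)`, so each summand
satisfies `‖xᵢ‖ - rᵢ² / 2 ≤ re ⟪xᵢ, e⟫`. Summing and applying Cauchy–Schwarz,
`∑ ‖xᵢ‖ - ½ ∑ rᵢ² ≤ re ⟪∑ xᵢ, e⟫ ≤ ‖∑ xᵢ‖`. Equality in the reverse triangle bound forces equality
in Cauchy–Schwarz, which makes `∑ xᵢ` the nonnegative multiple `‖∑ xᵢ‖ • e` of `e`.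
-/

open RCLike Finset
open scoped InnerProductSpace

section UnitVector

variable {𝕜 H : Type*} [RCLike 𝕜] [NormedAddCommGroup H] [InnerProductSpace 𝕜 H] {e : H}

theorem norm_sub_sq_div_two_le_re_inner_of_norm_sub_le (he : ‖e‖ = 1) {x : H} {ρ : ℝ}
    (hx : ‖x - e‖ ≤ ρ) : ‖x‖ - ρ ^ 2 / 2 ≤ re ⟪x, e⟫_𝕜 := by
  have hsq : ‖x - e‖ ^ 2 ≤ ρ ^ 2 := pow_le_pow_left₀ (norm_nonneg _) hx 2
  rw [norm_sub_sq (𝕜 := 𝕜), he] at hsq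
  nlinarith [sq_nonneg (‖x‖ - 1)]

theorem sum_norm_sub_le_re_inner_sum {ι : Type*} (s : Finset ι) (he : ‖e‖ = 1) {x : ι → H}
    {r : ι → ℝ} (hx : ∀ i ∈ s, ‖x i - e‖ ≤ r i) :
    ∑ i ∈ s, ‖x i‖ - (1 / 2) * ∑ i ∈ s, r i ^ 2 ≤ re ⟪∑ i ∈ s, x i, e⟫_𝕜 := by
  calc ∑ i ∈ s, ‖x i‖ - (1 / 2) * ∑ i ∈ s, r i ^ 2 = ∑ i ∈ s, (‖x i‖ - r i ^ 2 / 2) := by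
        rw [sum_sub_distrib, mul_sum]
        simp only [one_div, inv_mul_eq_div]
    _ ≤ ∑ i ∈ s, re ⟪x i, e⟫_𝕜 :=
        sum_le_sum fun i hi => norm_sub_sq_div_two_le_re_inner_of_norm_sub_le he (hx i hi)
    _ = re ⟪∑ i ∈ s, x i, e⟫_𝕜 := by rw [sum_inner, map_sum]

theorem eq_norm_smul_of_re_inner_eq_norm_s14 (he : ‖e‖ = 1) {v : H} (hv : re ⟪v, e⟫_𝕜 = ‖v‖) :
    v = (‖v‖ : 𝕜) • e := by
  apply eq_of_norm_le_re_inner_eq_norm_sq (𝕜 := 𝕜)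
  · rw [norm_smul, norm_ofReal, abs_norm, he, mul_one]
  · rw [inner_smul_right, re_ofReal_mul, hv, norm_smul, norm_ofReal, abs_norm, he, mul_one, sq]

end UnitVector

theorem additive_reverse_triangle_radii_general {𝕜 H : Type*} [RCLike 𝕜]
    [NormedAddCommGroup H] [InnerProductSpace 𝕜 H] {n : ℕ}
    (e : H) (he : ‖e‖ = 1) (r : Fin n → ℝ)
    (x : Fin n → H) (h : ∀ i, ‖x i - e‖ ≤ r i) :
    (0 ≤ ∑ i, ‖x i‖ - ‖∑ i, x i‖ ∧
      ∑ i, ‖x i‖ - ‖∑ i, x i‖ ≤ (1 / 2) * ∑ i, r i ^ 2) ∧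
      (∑ i, ‖x i‖ - ‖∑ i, x i‖ = (1 / 2) * ∑ i, r i ^ 2 ↔
        (1 / 2) * ∑ i, r i ^ 2 ≤ ∑ i, ‖x i‖ ∧
          ∑ i, x i = ((∑ i, ‖x i‖ - (1 / 2) * ∑ i, r i ^ 2 : ℝ) : 𝕜) • e) := by
  set S := ∑ i, ‖x i‖
  set R := (1 / 2) * ∑ i, r i ^ 2
  set v := ∑ i, x i
  have hlower : S - R ≤ re ⟪v, e⟫_𝕜 := sum_norm_sub_le_re_inner_sum univ he fun i _ => h i
  have hcs : re ⟪v, e⟫_𝕜 ≤ ‖v‖ := by simpa [he] using re_inner_le_norm (𝕜 := 𝕜) v e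
  have htri : ‖v‖ ≤ S := norm_sum_le _ _
  refine ⟨⟨by linarith, by linarith⟩, fun heq => ⟨by linarith [norm_nonneg v], ?_⟩, ?_⟩
  · have hnorm : ‖v‖ = S - R := by linarith
    rw [← hnorm]
    exact eq_norm_smul_of_re_inner_eq_norm_s14 he (by linarith)
  · rintro ⟨hRS, hv⟩
    have hnorm : ‖v‖ = S - R := by
      rw [hv, norm_smul, norm_ofReal, he, mul_one, abs_of_nonneg (by linarith)]
    linarith

theorem additive_reverse_triangle_radii {𝕜 H : Type*} [RCLike 𝕜]
    [NormedAddCommGroup H] [InnerProductSpace 𝕜 H] {n : ℕ}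
    (e : H) (he : ‖e‖ = 1) (r : Fin n → ℝ) (hr : ∀ i, 0 < r i)
    (x : Fin n → H) (h : ∀ i, ‖x i - e‖ ≤ r i) :
    (0 ≤ ∑ i, ‖x i‖ - ‖∑ i, x i‖ ∧
      ∑ i, ‖x i‖ - ‖∑ i, x i‖ ≤ (1 / 2) * ∑ i, r i ^ 2) ∧
      (∑ i, ‖x i‖ - ‖∑ i, x i‖ = (1 / 2) * ∑ i, r i ^ 2 ↔
        (1 / 2) * ∑ i, r i ^ 2 ≤ ∑ i, ‖x i‖ ∧
          ∑ i, x i = ((∑ i, ‖x i‖ - (1 / 2) * ∑ i, r i ^ 2 : ℝ) : 𝕜) • e) :=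
  additive_reverse_triangle_radii_general e he r x h
end

section
/- Let H be an inner product space over the real or complex numbers, let a ∈ H with ‖a‖ = 1, and let r ∈ (0,1). If x, y ∈ H satisfy ‖x − a‖ ≤ r and ‖y − a‖ ≤ r, then 0 ≤ (‖x‖ ‖y‖ − Re⟨x, y⟩) / (‖x‖ + ‖y‖)² ≤ (1/2) r². -/
/-!
Write `x = ⟪x, a⟫ a + x'` with `x' ⟂ a`. The ball condition `‖x - a‖ ≤ r` forces the component
along `a` to be at least `‖x‖ √(1 - r²)` and hence `‖x'‖ ≤ r ‖x‖`. Then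
`⟪x, y⟫ = ⟪x, a⟫ ⟪y, a⟫ + ⟪x', y'⟫ ≥ (1 - r²) ‖x‖ ‖y‖ - r² ‖x‖ ‖y‖`, so
`‖x‖ ‖y‖ - ⟪x, y⟫ ≤ 2 r² ‖x‖ ‖y‖ ≤ r² (‖x‖ + ‖y‖)² / 2`. Only real parts of inner products
occur, so the complex case reduces to the underlying real inner product space.
-/

open RCLike

open scoped InnerProductSpace

section Real

variable {F : Type*} [NormedAddCommGroup F] [InnerProductSpace ℝ F] {a x y : F} {r : ℝ}

theorem norm_mul_sqrt_le_inner_of_norm_sub_le (ha : ‖a‖ = 1) (hx : ‖x - a‖ ≤ r) (hr : r ≤ 1) :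
    ‖x‖ * √(1 - r ^ 2) ≤ ⟪x, a⟫_ℝ := by
  have hr0 : 0 ≤ r := (norm_nonneg _).trans hx
  have hs : √(1 - r ^ 2) ^ 2 = 1 - r ^ 2 := Real.sq_sqrt (by nlinarith)
  have hx2 : ‖x‖ ^ 2 - 2 * ⟪x, a⟫_ℝ + 1 ≤ r ^ 2 := by
    simpa only [norm_sub_sq_real, ha, one_pow] using pow_le_pow_left₀ (norm_nonneg _) hx 2
  -- AM-GM: `2 ‖x‖ √(1 - r²) ≤ ‖x‖² + (1 - r²)`
  nlinarith [sq_nonneg (‖x‖ - √(1 - r ^ 2))]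

theorem norm_sub_inner_smul_sq_of_norm_eq_one (ha : ‖a‖ = 1) :
    ‖x - ⟪x, a⟫_ℝ • a‖ ^ 2 = ‖x‖ ^ 2 - ⟪x, a⟫_ℝ ^ 2 := by
  rw [norm_sub_sq_real, real_inner_smul_right, norm_smul, ha, mul_one, Real.norm_eq_abs, sq_abs]
  ring

theorem inner_eq_inner_mul_inner_add_inner_sub_smul (ha : ‖a‖ = 1) :
    ⟪x, y⟫_ℝ = ⟪x, a⟫_ℝ * ⟪y, a⟫_ℝ + ⟪x - ⟪x, a⟫_ℝ • a, y - ⟪y, a⟫_ℝ • a⟫_ℝ := by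
  simp only [inner_sub_left, inner_sub_right, real_inner_smul_left, real_inner_smul_right,
    real_inner_self_eq_norm_sq, ha, real_inner_comm a]
  ring

theorem norm_sub_inner_smul_le_of_norm_sub_le (ha : ‖a‖ = 1) (hx : ‖x - a‖ ≤ r) (hr : r ≤ 1) :
    ‖x - ⟪x, a⟫_ℝ • a‖ ≤ r * ‖x‖ := by
  have hr0 : 0 ≤ r := (norm_nonneg _).trans hx
  have hs : √(1 - r ^ 2) ^ 2 = 1 - r ^ 2 := Real.sq_sqrt (by nlinarith)
  have hA := norm_mul_sqrt_le_inner_of_norm_sub_le ha hx hr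
  have hA2 : (‖x‖ * √(1 - r ^ 2)) ^ 2 ≤ ⟪x, a⟫_ℝ ^ 2 := pow_le_pow_left₀ (by positivity) hA 2
  refine pow_le_pow_iff_left₀ (norm_nonneg _) (by positivity) two_ne_zero |>.mp ?_
  rw [norm_sub_inner_smul_sq_of_norm_eq_one ha]
  nlinarith

theorem one_sub_two_mul_sq_mul_norm_mul_norm_le_inner (ha : ‖a‖ = 1) (hx : ‖x - a‖ ≤ r)
    (hy : ‖y - a‖ ≤ r) (hr : r ≤ 1) :
    (1 - 2 * r ^ 2) * (‖x‖ * ‖y‖) ≤ ⟪x, y⟫_ℝ := by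
  have hr0 : 0 ≤ r := (norm_nonneg _).trans hx
  have hs : √(1 - r ^ 2) ^ 2 = 1 - r ^ 2 := Real.sq_sqrt (by nlinarith)
  have hA := norm_mul_sqrt_le_inner_of_norm_sub_le ha hx hr
  have hB := norm_mul_sqrt_le_inner_of_norm_sub_le ha hy hr
  have hAB : (1 - r ^ 2) * (‖x‖ * ‖y‖) ≤ ⟪x, a⟫_ℝ * ⟪y, a⟫_ℝ := by
    calc (1 - r ^ 2) * (‖x‖ * ‖y‖) = ‖x‖ * √(1 - r ^ 2) * (‖y‖ * √(1 - r ^ 2)) := by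
          linear_combination -(‖x‖ * ‖y‖) * hs
      _ ≤ ⟪x, a⟫_ℝ * ⟪y, a⟫_ℝ :=
          mul_le_mul hA hB (by positivity) ((by positivity : (0 : ℝ) ≤ _).trans hA)
  have hperp : -(r * ‖x‖ * (r * ‖y‖)) ≤ ⟪x - ⟪x, a⟫_ℝ • a, y - ⟪y, a⟫_ℝ • a⟫_ℝ := by
    refine le_trans ?_ (neg_le_of_abs_le (abs_real_inner_le_norm _ _))
    exact neg_le_neg <| mul_le_mul (norm_sub_inner_smul_le_of_norm_sub_le ha hx hr)
      (norm_sub_inner_smul_le_of_norm_sub_le ha hy hr) (norm_nonneg _) (by positivity)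
  rw [inner_eq_inner_mul_inner_add_inner_sub_smul ha]
  linarith

end Real

theorem reverse_schwarz_ball {𝕜 H : Type*} [RCLike 𝕜] [NormedAddCommGroup H]
    [InnerProductSpace 𝕜 H] (a : H) (ha : ‖a‖ = 1) (r : ℝ)
    (hr : r ∈ Set.Ioo (0 : ℝ) 1) (x y : H)
    (hx : ‖x - a‖ ≤ r) (hy : ‖y - a‖ ≤ r) :
    0 ≤ (‖x‖ * ‖y‖ - re (inner 𝕜 x y : 𝕜)) / (‖x‖ + ‖y‖) ^ 2 ∧
      (‖x‖ * ‖y‖ - re (inner 𝕜 x y : 𝕜)) / (‖x‖ + ‖y‖) ^ 2 ≤ (1 / 2) * r ^ 2 := by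
  let := InnerProductSpace.rclikeToReal 𝕜 H
  have hxy : (1 - 2 * r ^ 2) * (‖x‖ * ‖y‖) ≤ re (inner 𝕜 x y : 𝕜) :=
    one_sub_two_mul_sq_mul_norm_mul_norm_le_inner ha hx hy hr.2.le
  refine ⟨div_nonneg (sub_nonneg.2 (re_inner_le_norm x y)) (sq_nonneg _),
    div_le_of_le_mul₀ (sq_nonneg _) (by positivity) ?_⟩
  nlinarith [sq_nonneg (‖x‖ - ‖y‖)]
end

section
/- Let H be an inner product space over ℝ or ℂ of dimension at least 2 and let a ∈ H with ‖a‖ = 1. Suppose C > 0 is a constant such that for every r ∈ (0,1) and all x, y ∈ H with ‖x − a‖ ≤ r and ‖y − a‖ ≤ r, one has (‖x‖ ‖y‖ − Re⟨x, y⟩) / (‖x‖ + ‖y‖)² ≤ C r². Then C ≥ 1/2. (Thus the constant 1/2 in the reverse Schwarz inequality for closed balls centered at a unit vector is best possible.) -/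
/-!
For a unit vector `e ⟂ a`, the points `a ± r • e` lie in the closed ball of radius `r` about `a`,
both have norm `√(1 + r ^ 2)`, and their inner product has real part `1 - r ^ 2`; so the
quotient equals `r ^ 2 / (2 * (1 + r ^ 2))`. Hence `1 / (2 * (1 + r ^ 2)) ≤ C` for every
`r ∈ (0, 1)`, and letting `r → 0` gives `1 / 2 ≤ C`.
-/

open RCLike Filter Topology

section

variable {𝕜 H : Type*} [RCLike 𝕜] [NormedAddCommGroup H] [InnerProductSpace 𝕜 H]

theorem re_inner_add_sub_eq_norm_sq_sub_norm_sq (x y : H) :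
    re (inner 𝕜 (x + y) (x - y)) = ‖x‖ ^ 2 - ‖y‖ ^ 2 := by
  simp only [inner_add_left, inner_sub_right, map_add, map_sub, inner_re_symm (𝕜 := 𝕜) y x,
    inner_self_eq_norm_sq]
  ring

theorem norm_add_eq_sqrt_of_inner_eq_zero {x y : H} (h : inner 𝕜 x y = 0) :
    ‖x + y‖ = √(‖x‖ ^ 2 + ‖y‖ ^ 2) := by
  rw [eq_comm, Real.sqrt_eq_iff_mul_self_eq (by positivity) (norm_nonneg _),
    norm_add_sq_eq_norm_sq_add_norm_sq_of_inner_eq_zero x y h]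
  ring

theorem norm_sub_eq_sqrt_of_inner_eq_zero {x y : H} (h : inner 𝕜 x y = 0) :
    ‖x - y‖ = √(‖x‖ ^ 2 + ‖y‖ ^ 2) := by
  have h' : inner 𝕜 x (-y) = 0 := by rw [inner_neg_right, h, neg_zero]
  rw [sub_eq_add_neg, norm_add_eq_sqrt_of_inner_eq_zero h', norm_neg]

theorem reverse_schwarz_quotient_add_sub_of_inner_eq_zero {a u : H} (h : inner 𝕜 a u = 0) :
    (‖a + u‖ * ‖a - u‖ - re (inner 𝕜 (a + u) (a - u))) / (‖a + u‖ + ‖a - u‖) ^ 2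
      = ‖u‖ ^ 2 / (2 * (‖a‖ ^ 2 + ‖u‖ ^ 2)) := by
  have hs : √(‖a‖ ^ 2 + ‖u‖ ^ 2) ^ 2 = ‖a‖ ^ 2 + ‖u‖ ^ 2 := Real.sq_sqrt (by positivity)
  rw [re_inner_add_sub_eq_norm_sq_sub_norm_sq, norm_add_eq_sqrt_of_inner_eq_zero h,
    norm_sub_eq_sqrt_of_inner_eq_zero h, ← two_mul, mul_pow, ← sq, hs]
  by_cases h0 : ‖a‖ ^ 2 + ‖u‖ ^ 2 = 0
  · simp [h0]
  · field_simp
    ring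

theorem exists_norm_eq_one_inner_eq_zero (hdim : 2 ≤ Module.rank 𝕜 H) (a : H) :
    ∃ e : H, ‖e‖ = 1 ∧ inner 𝕜 a e = 0 := by
  have hspan : (𝕜 ∙ a) ≠ ⊤ := by
    intro htop
    have h1 : Module.rank 𝕜 (𝕜 ∙ a) ≤ 1 := by simpa using rank_span_le (R := 𝕜) {a}
    rw [htop, rank_top] at h1
    exact absurd (hdim.trans h1) (by norm_num)
  obtain ⟨v, hv, hv0⟩ := Submodule.ne_bot_iff _ |>.mp
    fun hbot ↦ hspan (Submodule.orthogonal_eq_bot_iff.mp hbot)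
  refine ⟨((‖v‖⁻¹ : ℝ) : 𝕜) • v, by simp [norm_smul, hv0], ?_⟩
  rw [inner_smul_right, Submodule.mem_orthogonal_singleton_iff_inner_right.mp hv, mul_zero]

end

theorem reverse_schwarz_ball_sharp_general {𝕜 H : Type*} [RCLike 𝕜] [NormedAddCommGroup H]
    [InnerProductSpace 𝕜 H] (hdim : 2 ≤ Module.rank 𝕜 H)
    (a : H) (ha : ‖a‖ = 1) (C : ℝ)
    (h : ∀ r ∈ Set.Ioo (0 : ℝ) 1, ∀ x y : H, ‖x - a‖ ≤ r → ‖y - a‖ ≤ r →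
      (‖x‖ * ‖y‖ - re (inner 𝕜 x y : 𝕜)) / (‖x‖ + ‖y‖) ^ 2 ≤ C * r ^ 2) :
    1 / 2 ≤ C := by
  obtain ⟨e, he, hae⟩ := exists_norm_eq_one_inner_eq_zero hdim a
  have hbound : ∀ r ∈ Set.Ioo (0 : ℝ) 1, 1 / (2 * (1 + r ^ 2)) ≤ C := by
    intro r hr
    have hu : ‖(r : 𝕜) • e‖ = r := by simp [norm_smul, he, hr.1.le]
    have hau : inner 𝕜 a ((r : 𝕜) • e) = 0 := by rw [inner_smul_right, hae, mul_zero]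
    have hxy := h r hr (a + (r : 𝕜) • e) (a - (r : 𝕜) • e)
      (by simp [hu]) (by simp [hu])
    rw [reverse_schwarz_quotient_add_sub_of_inner_eq_zero hau, hu, ha, one_pow,
      div_le_iff₀ (by positivity)] at hxy
    rw [div_le_iff₀ (by positivity)]
    nlinarith [pow_pos hr.1 2]
  have hlim : Tendsto (fun r : ℝ ↦ 1 / (2 * (1 + r ^ 2))) (𝓝[>] 0) (𝓝 (1 / 2)) := by
    refine (Continuous.tendsto' ?_ 0 _ (by norm_num)).mono_left nhdsWithin_le_nhds
    exact continuous_const.div (by fun_prop) fun r ↦ by positivity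
  exact le_of_tendsto hlim (eventually_of_mem (Ioo_mem_nhdsGT one_pos) hbound)

theorem reverse_schwarz_ball_sharp {𝕜 H : Type*} [RCLike 𝕜] [NormedAddCommGroup H]
    [InnerProductSpace 𝕜 H] (hdim : 2 ≤ Module.rank 𝕜 H)
    (a : H) (ha : ‖a‖ = 1) (C : ℝ) (hC : 0 < C)
    (h : ∀ r ∈ Set.Ioo (0 : ℝ) 1, ∀ x y : H, ‖x - a‖ ≤ r → ‖y - a‖ ≤ r →
      (‖x‖ * ‖y‖ - re (inner 𝕜 x y : 𝕜)) / (‖x‖ + ‖y‖) ^ 2 ≤ C * r ^ 2) :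
    1 / 2 ≤ C :=
  reverse_schwarz_ball_sharp_general hdim a ha C h
end

section
/- Let H be a Hilbert space over ℝ or ℂ, let [a,b] ⊂ ℝ be a compact interval, and let η : [a,b] → [0,∞) be Lebesgue integrable with ∫ₐᵇ η(t) dt = 1. Let g : [a,b] → H be Bochner measurable with ∫ₐᵇ η(t) ‖g(t)‖² dt = 1, let ρ ∈ (0,1), and let f₁, …, fₙ : [a,b] → H be Bochner measurable with ∫ₐᵇ η(t) ‖fᵢ(t)‖² dt < ∞ for each i. If ‖fᵢ(t) − g(t)‖ ≤ ρ for almost every t ∈ [a,b] and each i ∈ {1, …, n}, then √(1 − ρ²) · Σᵢ₌₁ⁿ (∫ₐᵇ η(t) ‖fᵢ(t)‖² dt)^{1/2} ≤ (∫ₐᵇ η(t) ‖Σᵢ₌₁ⁿ fᵢ(t)‖² dt)^{1/2}. -/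
/-!
Realise `L²(η dt; H)` as the `L²` space of the probability measure `η dt` on `[a, b]`. In this
inner product space `g` is a unit vector and, by the pointwise bound, every `fᵢ` lies within `ρ`
of it. In any inner product space, `‖x - y‖ ≤ ρ` with `‖y‖ = 1` gives
`2 Re⟪x, y⟫ ≥ ‖x‖² + (1 - ρ²) ≥ 2 √(1 - ρ²) ‖x‖`; summing over `i` and applying Cauchy–Schwarz to
`Re⟪∑ xᵢ, y⟫` yields `√(1 - ρ²) ∑ ‖xᵢ‖ ≤ ‖∑ xᵢ‖`.
-/

open MeasureTheory Finset

section InnerProductSpace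

variable (𝕜 : Type*) {E : Type*} [RCLike 𝕜] [NormedAddCommGroup E]

theorem sqrt_one_sub_sq_mul_norm_le_re_inner_s19 [InnerProductSpace 𝕜 E] {x y : E} {ρ : ℝ}
    (hy : ‖y‖ = 1) (hρ : ρ ≤ 1) (hxy : ‖x - y‖ ≤ ρ) :
    √(1 - ρ ^ 2) * ‖x‖ ≤ RCLike.re (inner 𝕜 x y) := by
  have hρ0 : 0 ≤ ρ := (norm_nonneg _).trans hxy
  have hc : 0 ≤ 1 - ρ ^ 2 := by nlinarith
  have hdist : ‖x - y‖ ^ 2 ≤ ρ ^ 2 := pow_le_pow_left₀ (norm_nonneg _) hxy 2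
  rw [@norm_sub_sq 𝕜, hy] at hdist
  nlinarith [sq_nonneg (√(1 - ρ ^ 2) - ‖x‖), Real.sq_sqrt hc]

theorem sqrt_one_sub_sq_mul_sum_norm_le_norm_sum [InnerProductSpace 𝕜 E] {ι : Type*}
    (s : Finset ι) {x : ι → E} {y : E} {ρ : ℝ} (hy : ‖y‖ = 1) (hρ : ρ ≤ 1)
    (hxy : ∀ i ∈ s, ‖x i - y‖ ≤ ρ) :
    √(1 - ρ ^ 2) * ∑ i ∈ s, ‖x i‖ ≤ ‖∑ i ∈ s, x i‖ :=
  calc √(1 - ρ ^ 2) * ∑ i ∈ s, ‖x i‖ = ∑ i ∈ s, √(1 - ρ ^ 2) * ‖x i‖ := mul_sum _ _ _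
    _ ≤ ∑ i ∈ s, RCLike.re (inner 𝕜 (x i) y) :=
      sum_le_sum fun i hi => sqrt_one_sub_sq_mul_norm_le_re_inner_s19 𝕜 hy hρ (hxy i hi)
    _ = RCLike.re (inner 𝕜 (∑ i ∈ s, x i) y) := by rw [sum_inner, map_sum]
    _ ≤ ‖∑ i ∈ s, x i‖ := by simpa [hy] using re_inner_le_norm (𝕜 := 𝕜) (∑ i ∈ s, x i) y

end InnerProductSpace

namespace MeasureTheory

variable {α E : Type*} [MeasurableSpace α] {μ : Measure α} [NormedAddCommGroup E]

theorem Lp.norm_eq_sqrt_integral_norm_sq {F : Lp E 2 μ} {u : α → E} (hF : F =ᵐ[μ] u) :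
    ‖F‖ = √(∫ t, ‖u t‖ ^ 2 ∂μ) := by
  rw [Lp.norm_def, (Lp.memLp F).eLpNorm_eq_integral_rpow_norm two_ne_zero ENNReal.ofNat_ne_top,
    ENNReal.toReal_ofReal (by positivity), Real.sqrt_eq_rpow]
  norm_num only [ENNReal.toReal_ofNat, one_div, Real.rpow_two]
  congr 1
  exact integral_congr_ae (hF.fun_comp fun v => ‖v‖ ^ 2)

theorem MemLp.norm_toLp_le_of_ae_bound [IsProbabilityMeasure μ] {p : ENNReal} [Fact (1 ≤ p)]
    {u : α → E} (hu : MemLp u p μ) {C : ℝ} (hC : 0 ≤ C) (hbound : ∀ᵐ t ∂μ, ‖u t‖ ≤ C) :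
    ‖hu.toLp u‖ ≤ C := by
  refine (Lp.norm_le_of_ae_bound hC ?_).trans_eq (by simp [measureUnivNNReal])
  filter_upwards [hu.coeFn_toLp, hbound] with t ht htC
  rwa [ht]

theorem MemLp.coeFn_finsetSum_toLp {ι : Type*} {p : ENNReal} (s : Finset ι) {f : ι → α → E}
    (hf : ∀ i, MemLp (f i) p μ) :
    ⇑(∑ i ∈ s, (hf i).toLp (f i)) =ᵐ[μ] fun t => ∑ i ∈ s, f i t := by
  filter_upwards [Lp.coeFn_finsetSum s fun i => (hf i).toLp (f i),
    (Filter.eventually_all_finset s).2 fun i _ => (hf i).coeFn_toLp] with t hsum_t hf_t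
  rw [hsum_t, Finset.sum_apply]
  exact sum_congr rfl hf_t

section WeightedL2

variable {w : α → ℝ}

theorem integral_withDensity_ofReal [NormedSpace ℝ E] (hw : AEMeasurable w μ) (hw0 : 0 ≤ᵐ[μ] w)
    (φ : α → E) :
    ∫ t, φ t ∂μ.withDensity (fun t => ENNReal.ofReal (w t)) = ∫ t, w t • φ t ∂μ := by
  rw [integral_withDensity_eq_integral_toReal_smul₀ hw.ennreal_ofReal
    (ae_of_all _ fun _ => ENNReal.ofReal_lt_top)]
  refine integral_congr_ae ?_
  filter_upwards [hw0] with t ht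
  rw [ENNReal.toReal_ofReal ht]

theorem integrable_withDensity_ofReal_iff [NormedSpace ℝ E] (hw : AEMeasurable w μ)
    (hw0 : 0 ≤ᵐ[μ] w) {φ : α → E} :
    Integrable φ (μ.withDensity fun t => ENNReal.ofReal (w t)) ↔
      Integrable (fun t => w t • φ t) μ := by
  rw [integrable_withDensity_iff_integrable_smul₀' hw.ennreal_ofReal
    (ae_of_all _ fun _ => ENNReal.ofReal_lt_top)]
  refine integrable_congr ?_
  filter_upwards [hw0] with t ht
  rw [ENNReal.toReal_ofReal ht]

theorem isProbabilityMeasure_withDensity_ofReal (hw : Integrable w μ) (hw0 : 0 ≤ᵐ[μ] w)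
    (hw1 : ∫ t, w t ∂μ = 1) :
    IsProbabilityMeasure (μ.withDensity fun t => ENNReal.ofReal (w t)) := by
  constructor
  rw [withDensity_apply _ MeasurableSet.univ, Measure.restrict_univ,
    ← ofReal_integral_eq_lintegral_ofReal hw hw0, hw1, ENNReal.ofReal_one]

theorem memLp_two_withDensity_ofReal (hw : AEMeasurable w μ) (hw0 : 0 ≤ᵐ[μ] w) {u : α → E}
    (hu : AEStronglyMeasurable u μ) (hwu : Integrable (fun t => w t * ‖u t‖ ^ 2) μ) :
    MemLp u 2 (μ.withDensity fun t => ENNReal.ofReal (w t)) := by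
  rw [memLp_two_iff_integrable_sq_norm (hu.mono_ac (withDensity_absolutelyContinuous _ _)),
    integrable_withDensity_ofReal_iff hw hw0]
  exact hwu

theorem Lp.norm_withDensity_ofReal_eq_sqrt_integral (hw : AEMeasurable w μ) (hw0 : 0 ≤ᵐ[μ] w)
    {F : Lp E 2 (μ.withDensity fun t => ENNReal.ofReal (w t))} {u : α → E}
    (hF : F =ᵐ[μ.withDensity fun t => ENNReal.ofReal (w t)] u) :
    ‖F‖ = √(∫ t, w t * ‖u t‖ ^ 2 ∂μ) := by
  rw [Lp.norm_eq_sqrt_integral_norm_sq hF, integral_withDensity_ofReal hw hw0]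
  rfl

end WeightedL2

end MeasureTheory

theorem reverse_triangle_vector_valued_integral_general {𝕜 H : Type*} [RCLike 𝕜]
    [NormedAddCommGroup H] [InnerProductSpace 𝕜 H]
    {a b : ℝ} (η : ℝ → ℝ)
    (hη_int : IntegrableOn η (Set.Icc a b))
    (hη_nonneg : ∀ t ∈ Set.Icc a b, 0 ≤ η t)
    (hη_one : ∫ t in Set.Icc a b, η t = 1)
    (g : ℝ → H) (hg_meas : AEStronglyMeasurable g (volume.restrict (Set.Icc a b)))
    (hg_int : IntegrableOn (fun t => η t * ‖g t‖ ^ 2) (Set.Icc a b))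
    (hg_one : ∫ t in Set.Icc a b, η t * ‖g t‖ ^ 2 = 1)
    {n : ℕ} (f : Fin n → ℝ → H)
    (hf_meas : ∀ i, AEStronglyMeasurable (f i) (volume.restrict (Set.Icc a b)))
    (hf_int : ∀ i, IntegrableOn (fun t => η t * ‖f i t‖ ^ 2) (Set.Icc a b))
    (ρ : ℝ) (hρ : ρ ∈ Set.Ioo (0 : ℝ) 1)
    (h : ∀ i, ∀ᵐ t ∂(volume.restrict (Set.Icc a b)), ‖f i t - g t‖ ≤ ρ) :
    Real.sqrt (1 - ρ ^ 2) *
        ∑ i, Real.sqrt (∫ t in Set.Icc a b, η t * ‖f i t‖ ^ 2) ≤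
      Real.sqrt (∫ t in Set.Icc a b, η t * ‖∑ i, f i t‖ ^ 2) := by
  set ν := (volume.restrict (Set.Icc a b)).withDensity fun t => ENNReal.ofReal (η t)
  have hη_meas := hη_int.aemeasurable
  have hη_ae_nonneg : 0 ≤ᵐ[volume.restrict (Set.Icc a b)] η :=
    ae_restrict_of_forall_mem measurableSet_Icc hη_nonneg
  have : IsProbabilityMeasure ν :=
    isProbabilityMeasure_withDensity_ofReal hη_int hη_ae_nonneg hη_one
  have hf_L2 i : MemLp (f i) 2 ν :=
    memLp_two_withDensity_ofReal hη_meas hη_ae_nonneg (hf_meas i) (hf_int i)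
  have hg_L2 : MemLp g 2 ν := memLp_two_withDensity_ofReal hη_meas hη_ae_nonneg hg_meas hg_int
  have hg_norm : ‖hg_L2.toLp g‖ = 1 := by
    rw [Lp.norm_withDensity_ofReal_eq_sqrt_integral hη_meas hη_ae_nonneg hg_L2.coeFn_toLp,
      hg_one, Real.sqrt_one]
  have hdist i : ‖(hf_L2 i).toLp (f i) - hg_L2.toLp g‖ ≤ ρ := by
    rw [← MemLp.toLp_sub]
    exact ((hf_L2 i).sub hg_L2).norm_toLp_le_of_ae_bound hρ.1.le
      ((withDensity_absolutelyContinuous _ _).ae_le (h i))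
  have key := sqrt_one_sub_sq_mul_sum_norm_le_norm_sum 𝕜 univ hg_norm hρ.2.le fun i _ => hdist i
  rwa [Lp.norm_withDensity_ofReal_eq_sqrt_integral hη_meas hη_ae_nonneg
      (MemLp.coeFn_finsetSum_toLp univ hf_L2),
    sum_congr rfl fun i _ =>
      Lp.norm_withDensity_ofReal_eq_sqrt_integral hη_meas hη_ae_nonneg (hf_L2 i).coeFn_toLp] at key

theorem reverse_triangle_vector_valued_integral {𝕜 H : Type*} [RCLike 𝕜]
    [NormedAddCommGroup H] [InnerProductSpace 𝕜 H] [CompleteSpace H]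
    {a b : ℝ} (hab : a ≤ b) (η : ℝ → ℝ)
    (hη_int : IntegrableOn η (Set.Icc a b))
    (hη_nonneg : ∀ t ∈ Set.Icc a b, 0 ≤ η t)
    (hη_one : ∫ t in Set.Icc a b, η t = 1)
    (g : ℝ → H) (hg_meas : AEStronglyMeasurable g (volume.restrict (Set.Icc a b)))
    (hg_int : IntegrableOn (fun t => η t * ‖g t‖ ^ 2) (Set.Icc a b))
    (hg_one : ∫ t in Set.Icc a b, η t * ‖g t‖ ^ 2 = 1)
    {n : ℕ} (f : Fin n → ℝ → H)
    (hf_meas : ∀ i, AEStronglyMeasurable (f i) (volume.restrict (Set.Icc a b)))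
    (hf_int : ∀ i, IntegrableOn (fun t => η t * ‖f i t‖ ^ 2) (Set.Icc a b))
    (ρ : ℝ) (hρ : ρ ∈ Set.Ioo (0 : ℝ) 1)
    (h : ∀ i, ∀ᵐ t ∂(volume.restrict (Set.Icc a b)), ‖f i t - g t‖ ≤ ρ) :
    Real.sqrt (1 - ρ ^ 2) *
        ∑ i, Real.sqrt (∫ t in Set.Icc a b, η t * ‖f i t‖ ^ 2) ≤
      Real.sqrt (∫ t in Set.Icc a b, η t * ‖∑ i, f i t‖ ^ 2) :=
  reverse_triangle_vector_valued_integral_general (𝕜 := 𝕜) η hη_int hη_nonneg hη_one g hg_meas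
    hg_int hg_one f hf_meas hf_int ρ hρ h
end
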